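/- For every ℝ-weighted automaton A over alphabet Σ, the minimum size of a WA equivalent to A equals rank(L_A): there exists a WA of size rank(L_A) equivalent to A, and every WA equivalent to A has size at least rank(L_A). -/

import Mathlib

open Matrix

noncomputable section

/-- The matrix `M(w)` of a word: `M(ε) = I`, `M(a₁⋯a_k) = M(a₁)⋯M(a_k)`. -/
def wordProd {S : Type*} {Γ : Type*} [Fintype S] [DecidableEq S]
    (M : Γ → Matrix S S ℝ) (w : List Γ) : Matrix S S ℝ :=
  (w.map M).prod

/-- The language of the weighted automaton `(M, α, η)`: `L(w) = α M(w) η`. -/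
def WAlang {S : Type*} {Γ : Type*} [Fintype S] [DecidableEq S]
    (M : Γ → Matrix S S ℝ) (α η : S → ℝ) (w : List Γ) : ℝ :=
  α ⬝ᵥ (wordProd M w).mulVec η

/-! The Hankel rank is the dimension of the span of the rows `y ↦ L (x ++ y)`. Every
automaton `(M, α, η)` recognising `L` maps its state space onto a space containing these
rows (`v ↦ (y ↦ v M(y) η)` sends `α M(x)` to row `x`), so the rank is at most its size.
Conversely the row space is finite dimensional, contains `L` as row `ε`, and is stable under
the left quotients `f ↦ (y ↦ f (a :: y))`; in a basis of it these quotients are the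
transition matrices, `L` gives the initial vector and evaluation at `ε` the final one. -/

section Hankel

variable {Γ : Type*}

def hankelRow (L : List Γ → ℝ) (x : List Γ) : List Γ → ℝ :=
  fun y => L (x ++ y)

def hankelRowSpace (L : List Γ → ℝ) : Submodule ℝ (List Γ → ℝ) :=
  Submodule.span ℝ (Set.range (hankelRow L))

def consShift (a : Γ) : (List Γ → ℝ) →ₗ[ℝ] (List Γ → ℝ) :=
  LinearMap.funLeft ℝ ℝ (List.cons a)

lemma consShift_apply (a : Γ) (f : List Γ → ℝ) (y : List Γ) : consShift a f y = f (a :: y) :=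
  rfl

lemma mem_hankelRowSpace_self (L : List Γ → ℝ) : L ∈ hankelRowSpace L :=
  Submodule.subset_span ⟨[], rfl⟩

lemma consShift_mem_hankelRowSpace (L : List Γ → ℝ) (a : Γ) {f : List Γ → ℝ}
    (hf : f ∈ hankelRowSpace L) : consShift a f ∈ hankelRowSpace L := by
  have hstable : hankelRowSpace L ≤ (hankelRowSpace L).comap (consShift a) := by
    rw [hankelRowSpace, Submodule.span_le]
    rintro _ ⟨x, rfl⟩
    exact Submodule.subset_span ⟨x ++ [a], funext fun y => by simp [hankelRow, consShift_apply]⟩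
  exact hstable hf

section Automaton

variable {S : Type*} [Fintype S] [DecidableEq S]

lemma wordProd_nil (M : Γ → Matrix S S ℝ) : wordProd M [] = 1 :=
  rfl

lemma wordProd_cons (M : Γ → Matrix S S ℝ) (a : Γ) (w : List Γ) :
    wordProd M (a :: w) = M a * wordProd M w :=
  List.prod_cons

lemma wordProd_append (M : Γ → Matrix S S ℝ) (x y : List Γ) :
    wordProd M (x ++ y) = wordProd M x * wordProd M y := by
  simp [wordProd]

lemma WAlang_eq_vecMul_dotProduct (M : Γ → Matrix S S ℝ) (α η : S → ℝ) (w : List Γ) :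
    WAlang M α η w = (α ᵥ* wordProd M w) ⬝ᵥ η :=
  dotProduct_mulVec _ _ _

def WAlangLin (M : Γ → Matrix S S ℝ) (η : S → ℝ) : (S → ℝ) →ₗ[ℝ] (List Γ → ℝ) where
  toFun α := WAlang M α η
  map_add' u v := funext fun _ => add_dotProduct u v _
  map_smul' c v := funext fun _ => smul_dotProduct c v _

lemma hankelRow_WAlang (M : Γ → Matrix S S ℝ) (α η : S → ℝ) (x : List Γ) :
    hankelRow (WAlang M α η) x = WAlangLin M η (α ᵥ* wordProd M x) := by
  funext y
  simp [hankelRow, WAlangLin, WAlang, wordProd_append, ← mulVec_mulVec, dotProduct_mulVec]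

lemma hankelRowSpace_WAlang_le_range (M : Γ → Matrix S S ℝ) (α η : S → ℝ) :
    hankelRowSpace (WAlang M α η) ≤ LinearMap.range (WAlangLin M η) := by
  rw [hankelRowSpace, Submodule.span_le]
  rintro _ ⟨x, rfl⟩
  exact ⟨α ᵥ* wordProd M x, (hankelRow_WAlang M α η x).symm⟩

instance finiteDimensional_hankelRowSpace_WAlang (M : Γ → Matrix S S ℝ) (α η : S → ℝ) :
    FiniteDimensional ℝ (hankelRowSpace (WAlang M α η)) :=
  Submodule.finiteDimensional_of_le (hankelRowSpace_WAlang_le_range M α η)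

theorem finrank_hankelRowSpace_WAlang_le (M : Γ → Matrix S S ℝ) (α η : S → ℝ) :
    Module.finrank ℝ (hankelRowSpace (WAlang M α η)) ≤ Fintype.card S :=
  calc Module.finrank ℝ (hankelRowSpace (WAlang M α η))
      ≤ Module.finrank ℝ (LinearMap.range (WAlangLin M η)) :=
        Submodule.finrank_mono (hankelRowSpace_WAlang_le_range M α η)
    _ ≤ Module.finrank ℝ (S → ℝ) := LinearMap.finrank_range_le _
    _ = Fintype.card S := Module.finrank_fintype_fun_eq_card ℝ

end Automaton

lemma Module.Basis.repr_dotProduct_map {ι V : Type*} [Fintype ι] [AddCommGroup V]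
    [Module ℝ V] (b : Module.Basis ι ℝ V) (φ : V →ₗ[ℝ] ℝ) (u : V) :
    (b.repr u : ι → ℝ) ⬝ᵥ (fun i => φ (b i)) = φ u := by
  conv_rhs => rw [← b.sum_repr u, map_sum]
  simp [dotProduct]

theorem exists_WAlang_eq_of_consShift_mem (V : Submodule ℝ (List Γ → ℝ)) [FiniteDimensional ℝ V]
    (hV : ∀ a, ∀ f ∈ V, consShift a f ∈ V) {L : List Γ → ℝ} (hL : L ∈ V) :
    ∃ (M : Γ → Matrix (Fin (Module.finrank ℝ V)) (Fin (Module.finrank ℝ V)) ℝ)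
      (α η : Fin (Module.finrank ℝ V) → ℝ), WAlang M α η = L := by
  let b := Module.finBasis ℝ V
  let T a : V →ₗ[ℝ] V := (consShift a).restrict (hV a)
  let evalNil : V →ₗ[ℝ] ℝ := (LinearMap.proj []).comp V.subtype
  let M a := (LinearMap.toMatrix b b (T a))ᵀ
  have hstep (a : Γ) (u : V) : b.repr u ᵥ* M a = b.repr (T a u) := by
    rw [vecMul_transpose, LinearMap.toMatrix_mulVec_repr]
  have hword (w : List Γ) (u : V) :
      (b.repr u ᵥ* wordProd M w) ⬝ᵥ (fun i => evalNil (b i)) = (u : List Γ → ℝ) w := by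
    induction w generalizing u with
    | nil => rw [wordProd_nil, vecMul_one]; exact b.repr_dotProduct_map evalNil u
    | cons a w ih => rw [wordProd_cons, ← vecMul_vecMul, hstep, ih]; rfl
  exact ⟨M, b.repr ⟨L, hL⟩, fun i => evalNil (b i),
    funext fun w => (WAlang_eq_vecMul_dotProduct _ _ _ w).trans (hword w _)⟩

end Hankel

/-- the minimum size of a WA equivalent to `A` equals the rank of
the Hankel matrix of `L_A`: there is an equivalent WA of that size, and every
equivalent WA has at least that size. -/
theorem min_size_eq_hankel_rank {Γ : Type*} {n : ℕ}
    (M : Γ → Matrix (Fin n) (Fin n) ℝ) (α η : Fin n → ℝ) :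
    (∃ (n' : ℕ) (M' : Γ → Matrix (Fin n') (Fin n') ℝ) (α' η' : Fin n' → ℝ),
      (n' : Cardinal) =
        Module.rank ℝ
          ↥(Submodule.span ℝ
            (Set.range (fun x : List Γ => fun y : List Γ => WAlang M α η (x ++ y)))) ∧
      (∀ w : List Γ, WAlang M' α' η' w = WAlang M α η w)) ∧
    (∀ (n' : ℕ) (M' : Γ → Matrix (Fin n') (Fin n') ℝ) (α' η' : Fin n' → ℝ),
      (∀ w : List Γ, WAlang M' α' η' w = WAlang M α η w) →
      Module.rank ℝ
        ↥(Submodule.span ℝ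
          (Set.range (fun x : List Γ => fun y : List Γ => WAlang M α η (x ++ y)))) ≤
        (n' : Cardinal)) := by
  rw [show Submodule.span ℝ (Set.range fun x y => WAlang M α η (x ++ y)) =
    hankelRowSpace (WAlang M α η) from rfl]
  refine ⟨?_, fun n' M' α' η' hequiv => ?_⟩
  · obtain ⟨M', α', η', hL⟩ := exists_WAlang_eq_of_consShift_mem
      (hankelRowSpace (WAlang M α η))
      (fun a _ => consShift_mem_hankelRowSpace _ a) (mem_hankelRowSpace_self _)
    exact ⟨_, M', α', η', Module.finrank_eq_rank _ _, congrFun hL⟩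
  · rw [← funext hequiv, ← Module.finrank_eq_rank]
    exact_mod_cast (Fintype.card_fin n').subst (finrank_hankelRowSpace_WAlang_le M' α' η')
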